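/- If F : A × X → X is an f-action and F' : A × X → X is an f'-action such that Ωf ≃ Ωf' : ΩA → ΩX, then ΩF ≃ ΩF' : Ω(A × X) → ΩX. -/

import Mathlib

open ContinuousMap

def incl₁ {A X : Type*} [TopologicalSpace A] [TopologicalSpace X] (x₀ : X) : C(A, A × X) :=
  (ContinuousMap.id A).prodMk (ContinuousMap.const A x₀)

def incl₂ {A X : Type*} [TopologicalSpace A] [TopologicalSpace X] (a₀ : A) : C(X, A × X) :=
  (ContinuousMap.const X a₀).prodMk (ContinuousMap.id X)

def IsAction {A X : Type*} [TopologicalSpace A] [TopologicalSpace X] (a₀ : A) (x₀ : X)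
    (F : C(A × X, X)) (f : C(A, X)) : Prop :=
  (F.comp (incl₂ a₀)).HomotopicRel (ContinuousMap.id X) {x₀} ∧
  (F.comp (incl₁ x₀)).HomotopicRel f {a₀}

section
open unitInterval
variable {A X : Type*} [TopologicalSpace A] [TopologicalSpace X] {a₀ : A} {x₀ : X}

private lemma cfst : Continuous (Prod.fst : A × X → A) := continuous_fst
private lemma csnd : Continuous (Prod.snd : A × X → X) := continuous_snd
private lemma contI : Continuous fun t : I => (t : ℝ) := continuous_subtype_val

private lemma cont_uncurry_mapFst {Y : Type*} [TopologicalSpace Y]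
    (g : Y → Path (a₀, x₀) (a₀, x₀)) (hg : Continuous g) :
    Continuous ↿(fun y => (g y).map cfst) := by
  have h : ↿(fun y => (g y).map cfst) = fun p : Y × I => ((g p.1) p.2).1 := rfl
  rw [h]
  exact continuous_fst.comp (continuous_eval.comp ((hg.comp continuous_fst).prodMk continuous_snd))

private lemma cont_uncurry_mapSnd {Y : Type*} [TopologicalSpace Y]
    (g : Y → Path (a₀, x₀) (a₀, x₀)) (hg : Continuous g) :
    Continuous ↿(fun y => (g y).map csnd) := by
  have h : ↿(fun y => (g y).map csnd) = fun p : Y × I => ((g p.1) p.2).2 := rfl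
  rw [h]
  exact continuous_snd.comp (continuous_eval.comp ((hg.comp continuous_fst).prodMk continuous_snd))

private lemma cont_mapFst : Continuous fun γ : Path (a₀, x₀) (a₀, x₀) => γ.map cfst :=
  Path.continuous_uncurry_iff.mp (cont_uncurry_mapFst id continuous_id)

private lemma cont_mapSnd : Continuous fun γ : Path (a₀, x₀) (a₀, x₀) => γ.map csnd :=
  Path.continuous_uncurry_iff.mp (cont_uncurry_mapSnd id continuous_id)

private lemma path_map_refl_fst : (Path.refl (a₀, x₀)).map cfst = Path.refl a₀ := by
  ext t; rfl

private lemma path_map_refl_snd : (Path.refl (a₀, x₀)).map csnd = Path.refl x₀ := by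
  ext t; rfl

private noncomputable def middle (Ωf : C(Path a₀ a₀, Path x₀ x₀)) :
    C(Path (a₀, x₀) (a₀, x₀), Path x₀ x₀) :=
  ⟨fun γ => (Ωf (γ.map cfst)).trans (γ.map csnd),
    (Ωf.continuous.comp cont_mapFst).path_trans cont_mapSnd⟩

/-- underlying path of intermediate map: `t ↦ F(α.extend (2t), ξ.extend (2t-1))`. -/
private noncomputable def Npath (F : C(A × X, X)) (hFa : F (a₀, x₀) = x₀)
    (γ : Path (a₀, x₀) (a₀, x₀)) : Path x₀ x₀ where
  toFun := fun t : I => F ((γ.map cfst).extend (2 * t), (γ.map csnd).extend (2 * t - 1))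
  continuous_toFun := F.continuous.comp
    (((γ.map cfst).continuous_extend.comp (continuous_const.mul contI)).prodMk
      ((γ.map csnd).continuous_extend.comp ((continuous_const.mul contI).sub continuous_const)))
  source' := by
    show F ((γ.map cfst).extend (2 * ((0:I):ℝ)), (γ.map csnd).extend (2 * ((0:I):ℝ) - 1)) = x₀
    rw [Path.extend_of_le_zero _ (by norm_num), Path.extend_of_le_zero _ (by norm_num)]
    exact hFa
  target' := by
    show F ((γ.map cfst).extend (2 * ((1:I):ℝ)), (γ.map csnd).extend (2 * ((1:I):ℝ) - 1)) = x₀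
    rw [Path.extend_of_one_le _ (by norm_num), Path.extend_of_one_le _ (by norm_num)]
    exact hFa

private noncomputable def Nmap (F : C(A × X, X)) (hFa : F (a₀, x₀) = x₀) :
    C(Path (a₀, x₀) (a₀, x₀), Path x₀ x₀) :=
  ⟨Npath F hFa, by
    apply Path.continuous_uncurry_iff.mp
    show Continuous fun p : Path (a₀, x₀) (a₀, x₀) × I =>
      F ((p.1.map cfst).extend (2 * p.2), (p.1.map csnd).extend (2 * p.2 - 1))
    refine F.continuous.comp (Continuous.prodMk ?_ ?_)
    · exact Continuous.pathExtend (cont_uncurry_mapFst Prod.fst continuous_fst)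
        (continuous_const.mul (contI.comp continuous_snd))
    · exact Continuous.pathExtend (cont_uncurry_mapSnd Prod.fst continuous_fst)
        ((continuous_const.mul (contI.comp continuous_snd)).sub continuous_const)⟩
private lemma step1 (F : C(A × X, X)) (hFa : F (a₀, x₀) = x₀)
    (ΩF : C(Path (a₀, x₀) (a₀, x₀), Path x₀ x₀)) (hΩF : ∀ γ t, ΩF γ t = F (γ t)) :
    ΩF.HomotopicRel (Nmap F hFa) {Path.refl (a₀, x₀)} := by
  refine ⟨{
    toFun := fun p =>
      { toFun := fun t : I => F ((p.2.map cfst).extend ((1 + p.1) * t),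
          (p.2.map csnd).extend ((1 + p.1) * t - p.1))
        continuous_toFun := F.continuous.comp
          (((p.2.map cfst).continuous_extend.comp (continuous_const.mul contI)).prodMk
            ((p.2.map csnd).continuous_extend.comp
              ((continuous_const.mul contI).sub continuous_const)))
        source' := by
          show F ((p.2.map cfst).extend ((1 + (p.1:ℝ)) * ((0:I):ℝ)),
            (p.2.map csnd).extend ((1 + (p.1:ℝ)) * ((0:I):ℝ) - p.1)) = x₀
          rw [Path.extend_of_le_zero _ (by norm_num),
            Path.extend_of_le_zero _ (by have := p.1.2.1; norm_num; linarith)]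
          exact hFa
        target' := by
          show F ((p.2.map cfst).extend ((1 + (p.1:ℝ)) * ((1:I):ℝ)),
            (p.2.map csnd).extend ((1 + (p.1:ℝ)) * ((1:I):ℝ) - p.1)) = x₀
          rw [Path.extend_of_one_le _ (by have := p.1.2.1; norm_num; linarith),
            Path.extend_of_one_le _ (by norm_num)]
          exact hFa }
    continuous_toFun := by
      apply Path.continuous_uncurry_iff.mp
      show Continuous fun q : (I × Path (a₀, x₀) (a₀, x₀)) × I =>
        F ((q.1.2.map cfst).extend ((1 + q.1.1) * q.2),
           (q.1.2.map csnd).extend ((1 + q.1.1) * q.2 - q.1.1))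
      have hs : Continuous fun q : (I × Path (a₀, x₀) (a₀, x₀)) × I => (q.1.1 : ℝ) :=
        contI.comp (continuous_fst.fst)
      have ht : Continuous fun q : (I × Path (a₀, x₀) (a₀, x₀)) × I => (q.2 : ℝ) :=
        contI.comp continuous_snd
      refine F.continuous.comp (Continuous.prodMk ?_ ?_)
      · exact Continuous.pathExtend
          (cont_uncurry_mapFst (fun q : (I × Path (a₀, x₀) (a₀, x₀)) × I => q.1.2) (continuous_snd.comp continuous_fst))
          ((continuous_const.add hs).mul ht)
      · exact Continuous.pathExtend
          (cont_uncurry_mapSnd (fun q : (I × Path (a₀, x₀) (a₀, x₀)) × I => q.1.2) (continuous_snd.comp continuous_fst))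
          (((continuous_const.add hs).mul ht).sub hs)
    map_zero_left := by
      intro γ
      ext t
      show F ((γ.map cfst).extend ((1 + ((0:I):ℝ)) * t),
        (γ.map csnd).extend ((1 + ((0:I):ℝ)) * t - ((0:I):ℝ))) = ΩF γ t
      rw [hΩF]
      norm_num
    map_one_left := by
      intro γ
      ext t
      show F ((γ.map cfst).extend ((1 + ((1:I):ℝ)) * t),
        (γ.map csnd).extend ((1 + ((1:I):ℝ)) * t - ((1:I):ℝ))) = Npath F hFa γ t
      show _ = F ((γ.map cfst).extend (2 * t), (γ.map csnd).extend (2 * t - 1))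
      norm_num
    prop' := by
      intro s γ hγ
      rw [Set.mem_singleton_iff] at hγ
      subst hγ
      ext t
      show F (((Path.refl (a₀, x₀)).map cfst).extend _,
        ((Path.refl (a₀, x₀)).map csnd).extend _) = ΩF (Path.refl (a₀, x₀)) t
      rw [hΩF, path_map_refl_fst, path_map_refl_snd, Path.refl_extend, Path.refl_extend]
      rfl }⟩
private lemma step2 (F : C(A × X, X)) (f : C(A, X)) (hFa : F (a₀, x₀) = x₀)
    (L : (F.comp (incl₂ a₀)).HomotopyRel (ContinuousMap.id X) {x₀})
    (K : (F.comp (incl₁ x₀)).HomotopyRel f {a₀})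
    (Ωf : C(Path a₀ a₀, Path x₀ x₀)) (hΩf : ∀ γ t, Ωf γ t = f (γ t)) :
    (Nmap F hFa).HomotopicRel (middle Ωf) {Path.refl (a₀, x₀)} := by
  have hKa : ∀ s : I, K (s, a₀) = x₀ := fun s => (K.eq_fst s rfl).trans hFa
  have hLx : ∀ s : I, L (s, x₀) = x₀ := fun s => (L.eq_fst s rfl).trans hFa
  refine ⟨{
    toFun := fun p =>
      { toFun := fun t : I => if (t : ℝ) ≤ 1 / 2
          then K (p.1, (p.2.map cfst).extend (2 * t))
          else L (p.1, (p.2.map csnd).extend (2 * t - 1))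
        continuous_toFun := by
          refine Continuous.if_le ?_ ?_ contI continuous_const ?_
          · exact K.continuous.comp (continuous_const.prodMk
              ((p.2.map cfst).continuous_extend.comp (continuous_const.mul contI)))
          · exact L.continuous.comp (continuous_const.prodMk
              ((p.2.map csnd).continuous_extend.comp
                ((continuous_const.mul contI).sub continuous_const)))
          · intro t ht
            rw [show (2:ℝ) * t = 1 by rw [ht]; norm_num,
              Path.extend_of_one_le _ le_rfl, Path.extend_of_le_zero _ (by norm_num), hKa, hLx]
        source' := by
          show (if ((0:I) : ℝ) ≤ 1 / 2
            then K (p.1, (p.2.map cfst).extend (2 * ((0:I):ℝ)))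
            else L (p.1, (p.2.map csnd).extend (2 * ((0:I):ℝ) - 1))) = x₀
          rw [if_pos (by norm_num), Path.extend_of_le_zero _ (by norm_num)]
          exact hKa _
        target' := by
          show (if ((1:I) : ℝ) ≤ 1 / 2
            then K (p.1, (p.2.map cfst).extend (2 * ((1:I):ℝ)))
            else L (p.1, (p.2.map csnd).extend (2 * ((1:I):ℝ) - 1))) = x₀
          rw [if_neg (by norm_num), Path.extend_of_one_le _ (by norm_num)]
          exact hLx _ }
    continuous_toFun := by
      apply Path.continuous_uncurry_iff.mp
      show Continuous fun q : (I × Path (a₀, x₀) (a₀, x₀)) × I =>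
        if ((q.2 : ℝ)) ≤ 1 / 2 then K (q.1.1, (q.1.2.map cfst).extend (2 * q.2))
        else L (q.1.1, (q.1.2.map csnd).extend (2 * q.2 - 1))
      have ht : Continuous fun q : (I × Path (a₀, x₀) (a₀, x₀)) × I => (q.2 : ℝ) :=
        contI.comp continuous_snd
      refine Continuous.if_le ?_ ?_ ht continuous_const ?_
      · exact K.continuous.comp ((continuous_fst.fst).prodMk
          (Continuous.pathExtend
            (cont_uncurry_mapFst (fun q : (I × Path (a₀, x₀) (a₀, x₀)) × I => q.1.2) (continuous_snd.comp continuous_fst))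
            (continuous_const.mul ht)))
      · exact L.continuous.comp ((continuous_fst.fst).prodMk
          (Continuous.pathExtend
            (cont_uncurry_mapSnd (fun q : (I × Path (a₀, x₀) (a₀, x₀)) × I => q.1.2) (continuous_snd.comp continuous_fst))
            ((continuous_const.mul ht).sub continuous_const)))
      · intro q hq
        rw [show (2:ℝ) * q.2 = 1 by rw [hq]; norm_num,
          Path.extend_of_one_le _ le_rfl, Path.extend_of_le_zero _ (by norm_num), hKa, hLx]
    map_zero_left := by
      intro γ
      ext t
      show (if (t : ℝ) ≤ 1 / 2 then K (0, (γ.map cfst).extend (2 * t))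
        else L (0, (γ.map csnd).extend (2 * t - 1)))
        = F ((γ.map cfst).extend (2 * t), (γ.map csnd).extend (2 * t - 1))
      split_ifs with h
      · rw [K.apply_zero, Path.extend_of_le_zero (γ.map csnd) (by linarith)]
        rfl
      · rw [L.apply_zero, Path.extend_of_one_le (γ.map cfst) (by push_neg at h; linarith)]
        rfl
    map_one_left := by
      intro γ
      ext t
      show (if (t : ℝ) ≤ 1 / 2 then K (1, (γ.map cfst).extend (2 * t))
        else L (1, (γ.map csnd).extend (2 * t - 1)))
        = ((Ωf (γ.map cfst)).trans (γ.map csnd)) t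
      rw [Path.trans_apply]
      split_ifs with h
      · rw [K.apply_one, hΩf,
          Path.extend_apply (γ.map cfst) ⟨by have := t.2.1; linarith, by linarith⟩]
      · rw [L.apply_one,
          Path.extend_apply (γ.map csnd)
            ⟨by push_neg at h; linarith, by have := t.2.2; linarith⟩]
        rfl
    prop' := by
      intro s γ hγ
      rw [Set.mem_singleton_iff] at hγ
      subst hγ
      ext t
      show (if (t : ℝ) ≤ 1 / 2
          then K (s, ((Path.refl (a₀, x₀)).map cfst).extend (2 * t))
          else L (s, ((Path.refl (a₀, x₀)).map csnd).extend (2 * t - 1)))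
        = F (((Path.refl (a₀, x₀)).map cfst).extend (2 * t),
          ((Path.refl (a₀, x₀)).map csnd).extend (2 * t - 1))
      rw [path_map_refl_fst, path_map_refl_snd, Path.refl_extend, Path.refl_extend]
      simp only [ContinuousMap.const_apply, hFa]
      split_ifs with h
      · exact hKa s
      · exact hLx s }⟩
private lemma step3 (Ωf Ωf' : C(Path a₀ a₀, Path x₀ x₀))
    (hloops : Ωf.HomotopicRel Ωf' {Path.refl a₀}) :
    (middle Ωf).HomotopicRel (middle (a₀ := a₀) (x₀ := x₀) Ωf') {Path.refl (a₀, x₀)} := by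
  obtain ⟨W⟩ := hloops
  refine ⟨{
    toFun := fun p => (W (p.1, p.2.map cfst)).trans (p.2.map csnd)
    continuous_toFun := Continuous.path_trans
      (W.continuous.comp (continuous_fst.prodMk (cont_mapFst.comp continuous_snd)))
      (cont_mapSnd.comp continuous_snd)
    map_zero_left := by
      intro γ
      show (W (0, γ.map cfst)).trans (γ.map csnd) = (Ωf (γ.map cfst)).trans (γ.map csnd)
      rw [W.apply_zero]
    map_one_left := by
      intro γ
      show (W (1, γ.map cfst)).trans (γ.map csnd) = (Ωf' (γ.map cfst)).trans (γ.map csnd)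
      rw [W.apply_one]
    prop' := by
      intro s γ hγ
      rw [Set.mem_singleton_iff] at hγ
      subst hγ
      show (W (s, (Path.refl (a₀, x₀)).map cfst)).trans ((Path.refl (a₀, x₀)).map csnd)
        = (Ωf ((Path.refl (a₀, x₀)).map cfst)).trans ((Path.refl (a₀, x₀)).map csnd)
      rw [path_map_refl_fst, W.eq_fst s rfl] }⟩

end


/-- If `F` is an `f`-action and `F'` is an `f'`-action of `A` on `X`, and the looped
maps satisfy `Ωf ≃ Ωf' : ΩA → ΩX` (based homotopy), then `ΩF ≃ ΩF' : Ω(A×X) → ΩX`.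
The looped maps are characterized by their pointwise formulas. -/
theorem loops_of_actions_agree {A X : Type*} [TopologicalSpace A] [TopologicalSpace X]
    (a₀ : A) (x₀ : X)
    (F : C(A × X, X)) (f : C(A, X)) (hF : IsAction a₀ x₀ F f)
    (F' : C(A × X, X)) (f' : C(A, X)) (hF' : IsAction a₀ x₀ F' f')
    (ΩF : C(Path (a₀, x₀) (a₀, x₀), Path x₀ x₀)) (hΩF : ∀ γ t, ΩF γ t = F (γ t))
    (ΩF' : C(Path (a₀, x₀) (a₀, x₀), Path x₀ x₀)) (hΩF' : ∀ γ t, ΩF' γ t = F' (γ t))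
    (Ωf : C(Path a₀ a₀, Path x₀ x₀)) (hΩf : ∀ γ t, Ωf γ t = f (γ t))
    (Ωf' : C(Path a₀ a₀, Path x₀ x₀)) (hΩf' : ∀ γ t, Ωf' γ t = f' (γ t))
    (hloops : Ωf.HomotopicRel Ωf' {Path.refl a₀}) :
    ΩF.HomotopicRel ΩF' {Path.refl (a₀, x₀)} := by
  have hFa : F (a₀, x₀) = x₀ := by
    have h1 := hΩF (Path.refl (a₀, x₀)) 0
    have h2 := (ΩF (Path.refl (a₀, x₀))).source
    rw [h1] at h2; exact h2
  have hFa' : F' (a₀, x₀) = x₀ := by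
    have h1 := hΩF' (Path.refl (a₀, x₀)) 0
    have h2 := (ΩF' (Path.refl (a₀, x₀))).source
    rw [h1] at h2; exact h2
  obtain ⟨L⟩ := hF.1
  obtain ⟨K⟩ := hF.2
  obtain ⟨L'⟩ := hF'.1
  obtain ⟨K'⟩ := hF'.2
  have half : ΩF.HomotopicRel (middle Ωf) {Path.refl (a₀, x₀)} :=
    (step1 F hFa ΩF hΩF).trans (step2 F f hFa L K Ωf hΩf)
  have half' : ΩF'.HomotopicRel (middle Ωf') {Path.refl (a₀, x₀)} :=
    (step1 F' hFa' ΩF' hΩF').trans (step2 F' f' hFa' L' K' Ωf' hΩf')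
  exact (half.trans (step3 Ωf Ωf' hloops)).trans half'.symm
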